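/- arXiv:1609.07446 — 2 statements merged into one kernel-verified Lean document; each statement's English description precedes it below -/
import Mathlib

section
/- If f ∈ ℝ[x,y] is a polynomial of degree n whose degree-n homogeneous part f_n is hyperbolic (i.e., Hess f_n has no real linear factors and Hess f_n ≤ 0 everywhere), then the Hessian curve {(x,y) ∈ ℝ² : Hess f(x,y) = 0} is a compact subset of ℝ². -/
/-!
Write `f = f_n + r` with `deg r < n`. Then `Hess f = Hess f_n + E`, where `Hess f_n` is homogeneous
of degree `2n - 4` and every term of `E` contains a second derivative of `r`, so `deg E ≤ 2n - 5`.
Hyperbolicity and compactness of the unit sphere give `Hess f_n v ≤ -ε ‖v‖ ^ (2n - 4)`, while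
`|E v| ≤ C ‖v‖ ^ (2n - 5)` for `‖v‖ ≥ 1`. Hence `Hess f < 0` outside a ball, and the Hessian curve
is a closed bounded set.
-/

open MvPolynomial

/-- The Hessian determinant `f_xx f_yy - f_xy ^ 2` of a polynomial in two variables. -/
noncomputable def Hess (P : MvPolynomial (Fin 2) ℝ) : MvPolynomial (Fin 2) ℝ :=
  pderiv 0 (pderiv 0 P) * pderiv 1 (pderiv 1 P) - (pderiv 0 (pderiv 1 P)) ^ 2

namespace MvPolynomial

variable {R σ : Type*}

theorem totalDegree_pderiv_le [CommSemiring R] (p : MvPolynomial σ R) (i : σ) :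
    (pderiv i p).totalDegree ≤ p.totalDegree - 1 := by
  classical
  refine Finset.sup_le fun d hd => ?_
  rw [mem_support_iff, coeff_pderiv] at hd
  have := le_totalDegree (mem_support_iff.2 (left_ne_zero_of_mul hd))
  rw [Finsupp.sum_add_index' (fun _ => rfl) (fun _ _ _ => rfl),
    Finsupp.sum_single_index rfl] at this
  omega

theorem totalDegree_sub_homogeneousComponent_le [CommRing R] {p : MvPolynomial σ R} {n : ℕ}
    (hp : p.totalDegree ≤ n) : (p - homogeneousComponent n p).totalDegree ≤ n - 1 := by
  refine Finset.sup_le fun d hd => ?_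
  rw [mem_support_iff, coeff_sub, coeff_homogeneousComponent] at hd
  change d.degree ≤ n - 1
  split_ifs at hd with hdn
  · exact absurd (sub_self _) hd
  · have := (le_totalDegree (mem_support_iff.2 (by simpa using hd))).trans hp
    change d.degree ≤ n at this
    omega

theorem IsHomogeneous.eval_smul [CommRing R] {p : MvPolynomial σ R} {n : ℕ}
    (hp : p.IsHomogeneous n) (c : R) (v : σ → R) : eval (c • v) p = c ^ n * eval v p := by
  rw [eval_eq, eval_eq, Finset.mul_sum]
  refine Finset.sum_congr rfl fun d hd => ?_
  have hd : d.degree = n := by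
    rw [Finsupp.degree_eq_weight_one]; exact hp (mem_support_iff.mp hd)
  simp only [Pi.smul_apply, smul_eq_mul, mul_pow, Finset.prod_mul_distrib,
    Finset.prod_pow_eq_pow_sum, ← Finsupp.degree_apply, hd]
  ring

variable [Fintype σ]

theorem exists_abs_eval_le_mul_norm_pow (p : MvPolynomial σ ℝ) :
    ∃ C, 0 ≤ C ∧ ∀ v : σ → ℝ, 1 ≤ ‖v‖ → |eval v p| ≤ C * ‖v‖ ^ p.totalDegree := by
  refine ⟨∑ d ∈ p.support, |coeff d p|, by positivity, fun v hv => ?_⟩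
  have hmonomial : ∀ d ∈ p.support, |∏ i ∈ d.support, v i ^ d i| ≤ ‖v‖ ^ p.totalDegree := by
    intro d hd
    calc |∏ i ∈ d.support, v i ^ d i| = ∏ i ∈ d.support, |v i| ^ d i := by
          simp only [Finset.abs_prod, abs_pow]
      _ ≤ ∏ i ∈ d.support, ‖v‖ ^ d i :=
          Finset.prod_le_prod (fun _ _ => by positivity) fun i _ =>
            pow_le_pow_left₀ (abs_nonneg _) (norm_le_pi_norm v i) _
      _ = ‖v‖ ^ d.degree := Finset.prod_pow_eq_pow_sum _ _ _
      _ ≤ ‖v‖ ^ p.totalDegree := pow_le_pow_right₀ hv (le_totalDegree hd)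
  rw [eval_eq, Finset.sum_mul]
  refine (Finset.abs_sum_le_sum_abs _ _).trans (Finset.sum_le_sum fun d hd => ?_)
  rw [abs_mul]
  exact mul_le_mul_of_nonneg_left (hmonomial d hd) (abs_nonneg _)

theorem IsHomogeneous.exists_eval_le_neg_mul_norm_pow [Nonempty σ] {p : MvPolynomial σ ℝ}
    {m : ℕ} (hp : p.IsHomogeneous m) (hneg : ∀ v, v ≠ 0 → eval v p < 0) :
    ∃ ε > 0, ∀ v, v ≠ 0 → eval v p ≤ -ε * ‖v‖ ^ m := by
  obtain ⟨u, hu, hmax⟩ := (isCompact_sphere (0 : σ → ℝ) 1).exists_isMaxOn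
    (NormedSpace.sphere_nonempty.2 zero_le_one) (continuous_eval p).continuousOn
  refine ⟨-eval u p, neg_pos.2 (hneg u (ne_zero_of_mem_unit_sphere ⟨u, hu⟩)), fun v hv => ?_⟩
  have hv₀ : 0 < ‖v‖ := norm_pos_iff.2 hv
  have hsphere : ‖v‖⁻¹ • v ∈ Metric.sphere (0 : σ → ℝ) 1 := by
    simp [norm_smul, hv₀.ne']
  have hscale := hp.eval_smul ‖v‖ (‖v‖⁻¹ • v)
  rw [smul_inv_smul₀ hv₀.ne'] at hscale
  rw [hscale, neg_neg, mul_comm]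
  exact mul_le_mul_of_nonneg_right (hmax hsphere) (by positivity)

theorem isCompact_setOf_eval_eq_zero_of_neg_leading [Nonempty σ] {P p : MvPolynomial σ ℝ}
    {m : ℕ} (hp : p.IsHomogeneous m) (hneg : ∀ v, v ≠ 0 → eval v p < 0)
    (hlower : (P - p).totalDegree < m) :
    IsCompact {v : σ → ℝ | eval v P = 0} := by
  obtain ⟨ε, hε, hleading_le⟩ := hp.exists_eval_le_neg_mul_norm_pow hneg
  obtain ⟨C, hC, hlower_le⟩ := exists_abs_eval_le_mul_norm_pow (P - p)
  have hfar : ∀ v : σ → ℝ, max 1 (C / ε) < ‖v‖ → eval v P < 0 := by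
    intro v hv
    have hv₁ : 1 ≤ ‖v‖ := (le_max_left _ _).trans hv.le
    have hCv : C < ε * ‖v‖ := (div_lt_iff₀' hε).1 ((le_max_right _ _).trans_lt hv)
    have hpow : ‖v‖ ^ m = ‖v‖ ^ (m - 1) * ‖v‖ := by
      rw [← pow_succ, Nat.sub_add_cancel (by omega)]
    have hleading := hleading_le v (norm_pos_iff.1 (by linarith))
    have hrest : eval v P - eval v p ≤ C * ‖v‖ ^ (m - 1) := by
      rw [← map_sub]
      exact (le_abs_self _).trans ((hlower_le v hv₁).trans
        (mul_le_mul_of_nonneg_left (pow_le_pow_right₀ hv₁ (by omega)) hC))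
    rw [hpow] at hleading
    nlinarith [pow_pos (by linarith : (0 : ℝ) < ‖v‖) (m - 1)]
  refine (isCompact_closedBall (0 : σ → ℝ) (max 1 (C / ε))).of_isClosed_subset
    (isClosed_eq (continuous_eval P) continuous_const) fun v hv => ?_
  rw [mem_closedBall_zero_iff]
  exact not_lt.1 fun h => (hfar v h).ne hv

end MvPolynomial

theorem isHomogeneous_hess {g : MvPolynomial (Fin 2) ℝ} {n : ℕ} (hg : g.IsHomogeneous n) :
    (Hess g).IsHomogeneous (2 * (n - 2)) := by
  have h : ∀ i j, (pderiv i (pderiv j g)).IsHomogeneous (n - 2) := fun _ _ => by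
    simpa [Nat.sub_sub] using hg.pderiv.pderiv
  rw [Hess, two_mul]
  exact ((h 0 0).mul (h 1 1)).sub (by rw [← mul_two]; exact (h 0 1).pow 2)

theorem hess_sub_hess (f g : MvPolynomial (Fin 2) ℝ) :
    Hess f - Hess g = pderiv 0 (pderiv 0 f) * pderiv 1 (pderiv 1 (f - g))
      + pderiv 0 (pderiv 0 (f - g)) * pderiv 1 (pderiv 1 g)
      - pderiv 0 (pderiv 1 (f + g)) * pderiv 0 (pderiv 1 (f - g)) := by
  simp only [Hess, map_add, map_sub]
  ring

theorem totalDegree_hess_sub_hess_le {f g : MvPolynomial (Fin 2) ℝ} {n : ℕ}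
    (hf : f.totalDegree ≤ n) (hg : g.totalDegree ≤ n) (hfg : (f - g).totalDegree ≤ n - 1) :
    (Hess f - Hess g).totalDegree ≤ (n - 2) + (n - 3) := by
  have hterm : ∀ {a b : MvPolynomial (Fin 2) ℝ}, a.totalDegree ≤ n → b.totalDegree ≤ n - 1 →
      ∀ i j k l,
        (pderiv i (pderiv j a) * pderiv k (pderiv l b)).totalDegree ≤ (n - 2) + (n - 3) := by
    intro a b ha hb i j k l
    have := totalDegree_pderiv_le (pderiv j a) i
    have := totalDegree_pderiv_le a j
    have := totalDegree_pderiv_le (pderiv l b) k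
    have := totalDegree_pderiv_le b l
    exact (totalDegree_mul _ _).trans (by omega)
  rw [hess_sub_hess]
  refine (totalDegree_sub _ _).trans (max_le ((totalDegree_add _ _).trans (max_le ?_ ?_)) ?_)
  · exact hterm hf hfg ..
  · rw [mul_comm]
    exact hterm hg hfg ..
  · exact hterm ((totalDegree_add _ _).trans (max_le hf hg)) hfg ..

/-- If the leading homogeneous part `f_n` of `f` is hyperbolic (its Hessian is
nonpositive everywhere and vanishes only at the origin), then the Hessian curve
of `f` is compact. -/
theorem hessian_curve_compact_of_hyperbolic (n : ℕ) (hn : 3 ≤ n)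
    (f : MvPolynomial (Fin 2) ℝ) (hdeg : f.totalDegree = n)
    (hNonpos : ∀ v : Fin 2 → ℝ, eval v (Hess (homogeneousComponent n f)) ≤ 0)
    (hOnlyOrigin : ∀ v : Fin 2 → ℝ, eval v (Hess (homogeneousComponent n f)) = 0 → v = 0) :
    IsCompact {v : Fin 2 → ℝ | eval v (Hess f) = 0} := by
  have hleading : (homogeneousComponent n f).IsHomogeneous n :=
    homogeneousComponent_isHomogeneous n f
  have hlower := totalDegree_hess_sub_hess_le hdeg.le hleading.totalDegree_le
    (totalDegree_sub_homogeneousComponent_le hdeg.le)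
  refine isCompact_setOf_eval_eq_zero_of_neg_leading (isHomogeneous_hess hleading)
    (fun v hv => (hNonpos v).lt_of_ne fun h => hv (hOnlyOrigin v h)) ?_
  omega
end

section
/- An elliptic homogeneous polynomial f ∈ ℝ[x,y] (one whose Hessian is nonnegative everywhere and vanishes only at the origin) has no real linear factor: there is no nonzero linear form l(x,y) = ax + by dividing f. -/
open MvPolynomial

/-- An elliptic homogeneous polynomial has no real linear factor. -/
theorem elliptic_no_real_linear_factor (n : ℕ) (f : MvPolynomial (Fin 2) ℝ)
    (hf : f.IsHomogeneous n)
    (hNonneg : ∀ v : Fin 2 → ℝ, 0 ≤ eval v (Hess f))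
    (hOnlyOrigin : ∀ v : Fin 2 → ℝ, eval v (Hess f) = 0 → v = 0) :
    ∀ a b : ℝ, (a ≠ 0 ∨ b ≠ 0) → ¬ (C a * X 0 + C b * X 1 ∣ f) := by
  intro a b hab ⟨g, hg⟩
  set v : Fin 2 → ℝ := ![b, -a] with hv
  have d0l : pderiv (R := ℝ) 0 (C a * X 0 + C b * X 1) = C a := by
    simp [pderiv_X, Pi.single_apply]
  have d1l : pderiv (R := ℝ) 1 (C a * X 0 + C b * X 1) = C b := by
    simp [pderiv_X, Pi.single_apply]
  have hvl : eval v (C a * X 0 + C b * X 1) = 0 := by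
    simp [hv]; ring
  have key : eval v (Hess f) ≤ 0 := by
    have h00 : pderiv (R := ℝ) 0 (pderiv 0 f) =
        C a * pderiv 0 g + C a * pderiv 0 g + (C a * X 0 + C b * X 1) * pderiv 0 (pderiv 0 g) := by
      rw [hg]
      simp only [pderiv_mul, d0l, map_add, pderiv_C]
      simp [pderiv_X, Pi.single_apply]
      ring
    have h11 : pderiv (R := ℝ) 1 (pderiv 1 f) =
        C b * pderiv 1 g + C b * pderiv 1 g + (C a * X 0 + C b * X 1) * pderiv 1 (pderiv 1 g) := by
      rw [hg]
      simp only [pderiv_mul, d1l, map_add, pderiv_C]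
      simp [pderiv_X, Pi.single_apply]
      ring
    have h01 : pderiv (R := ℝ) 0 (pderiv 1 f) =
        C b * pderiv 0 g + C a * pderiv 1 g + (C a * X 0 + C b * X 1) * pderiv 0 (pderiv 1 g) := by
      rw [hg]
      simp only [pderiv_mul, d0l, d1l, map_add, pderiv_C]
      simp [pderiv_X, Pi.single_apply]
      ring
    rw [Hess, h00, h11, h01]
    simp only [map_sub, map_mul, map_add, map_pow, eval_C, hvl]
    nlinarith [sq_nonneg (a * eval v (pderiv 1 g) - b * eval v (pderiv 0 g))]
  have hz := hOnlyOrigin v (le_antisymm key (hNonneg v))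
  have hb : b = 0 := by
    have := congrFun hz 0; simpa [hv] using this
  have ha : a = 0 := by
    have := congrFun hz 1; simp [hv] at this; linarith
  rcases hab with h | h <;> exact h (by assumption)
end
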